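/- Let G be a locally compact abelian group, Λ a lattice in G with annihilator Λ^⊥ ⊆ Ĝ, and X = (G/Λ) × (Ĝ/Λ^⊥). Define E_{G,Λ} as the quotient of G × Ĝ × ℂ by the equivalence relation (x,ω,z) ∼ (xλ, ωτ, ω(λ)̄·z) for λ ∈ Λ, τ ∈ Λ^⊥, with projection π([x,ω,z]) = ([x],[ω]). Then π : E_{G,Λ} → X is a complex line bundle: it is locally trivial, with local trivializations over the open sets U_B = {([b],[ω]) : b ∈ B°, ω ∈ Ĝ} for fundamental domains B, given by h([x,ω,z]) = ([x],[ω], ω(⌊x⌋_B)z). -/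

import Mathlib

/-- `B` is a fundamental domain for the subgroup `Λ` in `G`. -/
def IsFundDomain {G : Type*} [Group G] (Λ : Subgroup G) (B : Set G) : Prop :=
  ∀ x : G, ∃! p : B × Λ, x = (p.1 : G) * (p.2 : G)

/-- The annihilator `Λ^⊥ ⊆ Ĝ` of a subgroup `Λ ⊆ G`. -/
def annih {G : Type*} [CommGroup G] [TopologicalSpace G] [IsTopologicalGroup G]
    (Λ : Subgroup G) : Subgroup (PontryaginDual G) where
  carrier := {ω | ∀ l ∈ Λ, ω l = 1}
  one_mem' := by intro l _; rfl
  mul_mem' := by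
    intro a b ha hb l hl
    have : (a * b) l = a l * b l := rfl
    rw [this, ha l hl, hb l hl, mul_one]
  inv_mem' := by
    intro a ha l hl
    have : (a⁻¹ : PontryaginDual _) l = (a l)⁻¹ := rfl
    rw [this, ha l hl, inv_one]

/-- The relation on `G × Ĝ × ℂ` defining the Heisenberg line bundle `E_{G,Λ}`:
`(x,ω,z) ∼ (xλ, ωτ, conj(ω(λ))·z)` for `λ ∈ Λ`, `τ ∈ Λ^⊥`. -/
def heisRel {G : Type*} [CommGroup G] [TopologicalSpace G] [IsTopologicalGroup G]
    (Λ : Subgroup G) :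
    (G × PontryaginDual G × ℂ) → (G × PontryaginDual G × ℂ) → Prop :=
  fun p q => ∃ (l : Λ) (τ : annih Λ),
    q.1 = p.1 * l ∧ q.2.1 = p.2.1 * (τ : PontryaginDual G) ∧
    q.2.2 = (starRingEnd ℂ) ((p.2.1 (l : G) : ℂ)) * p.2.2

/-- The open subset `U_B ⊆ X = (G/Λ) × (Ĝ/Λ^⊥)` determined by a fundamental domain `B`. -/
def UB {G : Type*} [CommGroup G] [TopologicalSpace G] [IsTopologicalGroup G]
    (Λ : Subgroup G) (B : Set G) :
    Set ((G ⧸ Λ) × (PontryaginDual G ⧸ annih Λ)) :=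
  {q | ∃ b ∈ interior B, ∃ ω : PontryaginDual G,
    q = (QuotientGroup.mk b, QuotientGroup.mk ω)}

/-!
A floor function `⌊·⌋_B` is defined on all of `G`, so `h([x,ω,z]) = ([x],[ω], ω(⌊x⌋_B) z)` and
`k([x],[ω],z) = [x, ω, conj(ω(⌊x⌋_B)) z]` are well defined mutually inverse maps between the whole
of `E_{G,Λ}` and `X × ℂ`; only continuity is local. Where `x⌊x⌋_B⁻¹` lies in the interior of
`B`, the floor is locally constant, so near such points both maps are given upstairs, on
`G × Ĝ × ℂ`, by continuous formulas, and continuity descends because the quotient maps onto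
`E_{G,Λ}` and onto `X × ℂ` are open. The sets `U_B` cover `X` since, `Λ` being discrete, every
point has a neighbourhood that injects into `G ⧸ Λ`, and any such set extends to a fundamental
domain.
-/

open Topology Filter ComplexConjugate

section FundamentalDomain

variable {G : Type*} [Group G] {Λ : Subgroup G} {B : Set G}

theorem isFundDomain_iff_bijOn :
    IsFundDomain Λ B ↔ Set.BijOn (QuotientGroup.mk : G → G ⧸ Λ) B Set.univ := by
  refine ⟨fun hB => ⟨Set.mapsTo_univ _ _, ?_, ?_⟩, fun hB x => ?_⟩
  · intro b hb b' hb' hbb'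
    have hpair := (hB b').unique (y₁ := (⟨b', hb'⟩, 1))
      (y₂ := (⟨b, hb⟩, ⟨b⁻¹ * b', QuotientGroup.eq.mp hbb'⟩)) (by simp) (by simp)
    exact congrArg (fun p : B × Λ => (p.1 : G)) hpair.symm
  · rintro q -
    obtain ⟨⟨⟨b, hb⟩, l⟩, hx, -⟩ := hB q.out
    refine ⟨b, hb, ?_⟩
    rw [← QuotientGroup.out_eq' q, hx]
    exact (QuotientGroup.mk_mul_of_mem b l.2).symm
  · obtain ⟨b, hb, hbx⟩ := hB.surjOn (Set.mem_univ (x : G ⧸ Λ))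
    refine ⟨(⟨b, hb⟩, ⟨b⁻¹ * x, QuotientGroup.eq.mp hbx⟩), by simp, ?_⟩
    rintro ⟨⟨b', hb'⟩, l'⟩ rfl
    obtain rfl : b' = b :=
      hB.injOn hb' hb ((QuotientGroup.mk_mul_of_mem b' l'.2).symm.trans hbx.symm)
    ext <;> simp

namespace IsFundDomain

theorem floor_unique (hB : IsFundDomain Λ B) {x : G} {l l' : Λ}
    (h : x * (l : G)⁻¹ ∈ B) (h' : x * (l' : G)⁻¹ ∈ B) : l = l' := by
  have hmk : ((x * (l : G)⁻¹ : G) : G ⧸ Λ) = ((x * (l' : G)⁻¹ : G) : G ⧸ Λ) :=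
    QuotientGroup.eq.mpr (by simpa using mul_mem l.2 (inv_mem l'.2))
  simpa using (isFundDomain_iff_bijOn.mp hB).injOn h h' hmk

variable {fl : G → Λ}

theorem floor_mul (hB : IsFundDomain Λ B) (hfl : ∀ x, x * (fl x : G)⁻¹ ∈ B) (x : G) (l : Λ) :
    fl (x * l) = fl x * l :=
  hB.floor_unique (hfl _) (by simpa [mul_assoc] using hfl x)

theorem mk_mem_image_iff (hB : IsFundDomain Λ B) (hfl : ∀ x, x * (fl x : G)⁻¹ ∈ B) {s : Set G}
    (hs : s ⊆ B) (x : G) :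
    (x : G ⧸ Λ) ∈ QuotientGroup.mk '' s ↔ x * (fl x : G)⁻¹ ∈ s := by
  refine ⟨?_, fun hx => ⟨_, hx, QuotientGroup.mk_mul_of_mem x (inv_mem (fl x).2)⟩⟩
  rintro ⟨b, hb, hbx⟩
  obtain ⟨l, rfl⟩ : ∃ l : Λ, b * l = x := ⟨⟨b⁻¹ * x, QuotientGroup.eq.mp hbx⟩, by simp⟩
  have : fl b = 1 := hB.floor_unique (hfl b) (by simpa using hs hb)
  simpa [hB.floor_mul hfl, this] using hb

variable [TopologicalSpace G]

theorem eventually_floor_eq [ContinuousMul G] (hB : IsFundDomain Λ B)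
    (hfl : ∀ x, x * (fl x : G)⁻¹ ∈ B) {x : G} (hx : x * (fl x : G)⁻¹ ∈ interior B) :
    ∀ᶠ y in 𝓝 x, fl y = fl x := by
  have hnhds : {y : G | y * (fl x : G)⁻¹ ∈ interior B} ∈ 𝓝 x :=
    (isOpen_interior.preimage (continuous_mul_const _)).mem_nhds hx
  filter_upwards [hnhds] with y hy
  exact hB.floor_unique (hfl y) (interior_subset hy)

theorem continuousOn_floor_comp [ContinuousMul G] {Z Y : Type*} [TopologicalSpace Z]
    [TopologicalSpace Y] (hB : IsFundDomain Λ B) (hfl : ∀ x, x * (fl x : G)⁻¹ ∈ B)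
    {F : Λ → Z → Y} (hF : ∀ l, Continuous (F l)) {g : Z → G} (hg : Continuous g) :
    ContinuousOn (fun z => F (fl (g z)) z) {z | g z * (fl (g z) : G)⁻¹ ∈ interior B} := by
  intro z hz
  refine ((hF (fl (g z))).continuousAt.congr ?_).continuousWithinAt
  filter_upwards [hg.continuousAt.eventually (hB.eventually_floor_eq hfl hz)] with y hy
  rw [hy]

end IsFundDomain

theorem exists_mem_nhds_injOn_mk [TopologicalSpace G] [IsTopologicalGroup G] (Λ : Subgroup G)
    [DiscreteTopology Λ] (x : G) : ∃ A ∈ 𝓝 x, Set.InjOn (QuotientGroup.mk : G → G ⧸ Λ) A := by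
  obtain ⟨V, hV, hVΛ⟩ := nhds_inter_eq_singleton_of_mem_discrete
    (isDiscrete_iff_discreteTopology.mpr ‹_›) Λ.one_mem
  obtain ⟨W, hW, hWV⟩ := exists_nhds_split_inv hV
  have hA : {y : G | y⁻¹ * x ∈ W} ∈ 𝓝 x :=
    (continuous_inv.mul continuous_const).continuousAt.preimage_mem_nhds (by simpa using hW)
  refine ⟨_, hA, fun y hy y' hy' hyy' => ?_⟩
  have hmem : y⁻¹ * y' ∈ V ∩ Λ :=
    ⟨by simpa [div_eq_mul_inv, mul_assoc] using hWV _ hy _ hy', QuotientGroup.eq.mp hyy'⟩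
  rw [hVΛ] at hmem
  exact inv_mul_eq_one.mp hmem

theorem exists_isFundDomain_mem_interior [TopologicalSpace G] [IsTopologicalGroup G]
    (Λ : Subgroup G) [DiscreteTopology Λ] (x : G) :
    ∃ B, IsFundDomain Λ B ∧ x ∈ interior B := by
  obtain ⟨A, hA, hinj⟩ := exists_mem_nhds_injOn_mk Λ x
  obtain ⟨B, hAB, hB⟩ := hinj.bijOn_image.exists_extend (Set.subset_univ _)
    (by simp [QuotientGroup.mk_surjective.range_eq])
  exact ⟨B, isFundDomain_iff_bijOn.mpr hB, interior_mono hAB (mem_interior_iff_mem_nhds.mpr hA)⟩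

end FundamentalDomain

theorem Circle.coe_mul_conj (z : Circle) : (z : ℂ) * conj (z : ℂ) = 1 := by
  rw [← Circle.coe_inv_eq_conj, ← Circle.coe_mul, mul_inv_cancel, Circle.coe_one]

theorem IsOpenQuotientMap.continuousOn_of_comp {X Y Z : Type*} [TopologicalSpace X]
    [TopologicalSpace Y] [TopologicalSpace Z] {f : X → Y} (hf : IsOpenQuotientMap f) {g : Y → Z}
    {s : Set Y} (hg : ContinuousOn (g ∘ f) (f ⁻¹' s)) : ContinuousOn g s := by
  intro y hy
  obtain ⟨x, rfl⟩ := hf.surjective y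
  have hnhds : 𝓝[s] (f x) = map f (𝓝[f ⁻¹' s] x) := by
    rw [nhdsWithin, ← hf.map_nhds_eq, ← map_inf_principal_preimage, nhdsWithin]
  rw [ContinuousWithinAt, hnhds, tendsto_map'_iff]
  exact hg x hy

theorem isOpenMap_quot_mk_of_forall_rel_iff {X ι : Type*} [TopologicalSpace X]
    {r : X → X → Prop} (hr : Equivalence r) (f : ι → X → X) (hf : ∀ i, Continuous (f i))
    (hrf : ∀ p q, r p q ↔ ∃ i, f i q = p) : IsOpenMap (Quot.mk r) := by
  intro U hU
  have hsat : Quot.mk r ⁻¹' (Quot.mk r '' U) = ⋃ i, f i ⁻¹' U := by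
    ext q
    simp only [Set.mem_preimage, Set.mem_image, Set.mem_iUnion, Quot.eq, hr.eqvGen_iff, hrf]
    constructor
    · rintro ⟨p, hp, i, rfl⟩
      exact ⟨i, hp⟩
    · rintro ⟨i, hi⟩
      exact ⟨_, hi, i, rfl⟩
  rw [isOpen_coinduced, hsat]
  exact isOpen_iUnion fun i => hU.preimage (hf i)

instance {A : Type*} [Monoid A] [TopologicalSpace A] :
    ContinuousEvalConst (PontryaginDual A) A Circle :=
  inferInstanceAs (ContinuousEvalConst (A →ₜ* Circle) A Circle)

theorem PontryaginDual.mul_apply {A : Type*} [Monoid A] [TopologicalSpace A]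
    (ω τ : PontryaginDual A) (a : A) : (ω * τ) a = ω a * τ a :=
  rfl

section HeisenbergBundle

variable {G : Type*} [CommGroup G] [TopologicalSpace G] [IsTopologicalGroup G] {Λ : Subgroup G}

theorem mul_annih_apply (ω : PontryaginDual G) (τ : annih Λ) (l : Λ) : (ω * τ) l = ω l := by
  rw [PontryaginDual.mul_apply, τ.2 l l.2, mul_one]

/-- `heisRel Λ` is the orbit relation of this action of `Λ × Λ^⊥`. -/
noncomputable def heisAct (l : Λ) (τ : annih Λ) (p : G × PontryaginDual G × ℂ) :
    G × PontryaginDual G × ℂ :=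
  (p.1 * l, p.2.1 * τ, conj (p.2.1 l : ℂ) * p.2.2)

theorem heisRel_iff {p q : G × PontryaginDual G × ℂ} :
    heisRel Λ p q ↔ ∃ (l : Λ) (τ : annih Λ), heisAct l τ p = q := by
  simp only [heisRel, heisAct, Prod.ext_iff, eq_comm]

theorem heisAct_one (p : G × PontryaginDual G × ℂ) : heisAct (1 : Λ) 1 p = p := by
  simp [heisAct]

theorem heisAct_heisAct (l l' : Λ) (τ τ' : annih Λ) (p : G × PontryaginDual G × ℂ) :
    heisAct l' τ' (heisAct l τ p) = heisAct (l * l') (τ * τ') p := by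
  simp only [heisAct, Prod.mk.injEq, Subgroup.coe_mul, mul_assoc, mul_annih_apply, map_mul,
    Circle.coe_mul, true_and]
  ring

theorem heisAct_inv_heisAct (l : Λ) (τ : annih Λ) (p : G × PontryaginDual G × ℂ) :
    heisAct l⁻¹ τ⁻¹ (heisAct l τ p) = p := by
  rw [heisAct_heisAct, mul_inv_cancel, mul_inv_cancel, heisAct_one]

theorem heisRel_equivalence (Λ : Subgroup G) : Equivalence (heisRel Λ) where
  refl p := heisRel_iff.mpr ⟨1, 1, heisAct_one p⟩
  symm := by
    simp only [heisRel_iff]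
    rintro p _ ⟨l, τ, rfl⟩
    exact ⟨l⁻¹, τ⁻¹, heisAct_inv_heisAct l τ p⟩
  trans := by
    simp only [heisRel_iff]
    rintro p _ _ ⟨l, τ, rfl⟩ ⟨l', τ', rfl⟩
    exact ⟨l * l', τ * τ', (heisAct_heisAct l l' τ τ' p).symm⟩

theorem continuous_heisAct (l : Λ) (τ : annih Λ) : Continuous (heisAct l τ) := by
  refine (continuous_fst.mul continuous_const).prodMk
    ((continuous_snd.fst.mul continuous_const).prodMk ?_)
  fun_prop

theorem isOpenQuotientMap_quot_mk_heisRel (Λ : Subgroup G) :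
    IsOpenQuotientMap (Quot.mk (heisRel Λ)) := by
  refine ⟨Quot.mk_surjective, continuous_quot_mk, isOpenMap_quot_mk_of_forall_rel_iff
    (heisRel_equivalence Λ) (fun i : Λ × annih Λ => heisAct i.1⁻¹ i.2⁻¹)
    (fun i => continuous_heisAct _ _) fun p q => ?_⟩
  rw [heisRel_iff]
  constructor
  · rintro ⟨l, τ, rfl⟩
    exact ⟨(l, τ), heisAct_inv_heisAct l τ p⟩
  · rintro ⟨⟨l, τ⟩, rfl⟩
    exact ⟨l, τ, by simpa using heisAct_inv_heisAct l⁻¹ τ⁻¹ q⟩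

variable (Λ) in
noncomputable def heisProj : Quot (heisRel Λ) → (G ⧸ Λ) × (PontryaginDual G ⧸ annih Λ) :=
  Quot.lift (fun p => ((p.1 : G ⧸ Λ), (p.2.1 : PontryaginDual G ⧸ annih Λ))) fun p _ hpq => by
    obtain ⟨l, τ, rfl⟩ := heisRel_iff.mp hpq
    simp only [heisAct, QuotientGroup.mk_mul_of_mem _ l.2, QuotientGroup.mk_mul_of_mem _ τ.2]

variable (Λ) in
theorem continuous_heisProj : Continuous (heisProj Λ) :=
  continuous_quot_lift _ <| (QuotientGroup.continuous_mk.comp continuous_fst).prodMk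
    (QuotientGroup.continuous_mk.comp continuous_snd.fst)

variable (Λ) in
theorem UB_eq_prod (B : Set G) : UB Λ B = (QuotientGroup.mk '' interior B) ×ˢ Set.univ := by
  ext ⟨q, ρ⟩
  constructor
  · rintro ⟨b, hb, ω, hq⟩
    simp only [Prod.mk.injEq] at hq
    exact ⟨⟨b, hb, hq.1.symm⟩, trivial⟩
  · rintro ⟨⟨b, hb, rfl⟩, -⟩
    exact ⟨b, hb, ρ.out, by rw [QuotientGroup.out_eq']⟩

variable (Λ) in
theorem isOpen_UB (B : Set G) : IsOpen (UB Λ B) := by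
  rw [UB_eq_prod]
  exact (QuotientGroup.isOpenMap_coe _ isOpen_interior).prod isOpen_univ

variable (Λ) in
theorem iUnion_UB_eq_univ [DiscreteTopology Λ] :
    ⋃ B ∈ {B : Set G | IsFundDomain Λ B}, UB Λ B = Set.univ := by
  refine Set.eq_univ_of_forall fun ⟨q, ρ⟩ => ?_
  obtain ⟨B, hB, hxB⟩ := exists_isFundDomain_mem_interior Λ q.out
  exact Set.mem_biUnion hB ⟨q.out, hxB, ρ.out, by simp only [QuotientGroup.out_eq']⟩

variable {B : Set G} {fl : G → Λ}

theorem IsFundDomain.mk_mem_UB_iff (hB : IsFundDomain Λ B) (hfl : ∀ x, x * (fl x : G)⁻¹ ∈ B)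
    (x : G) (ω : PontryaginDual G) :
    ((x : G ⧸ Λ), (ω : PontryaginDual G ⧸ annih Λ)) ∈ UB Λ B ↔
      x * (fl x : G)⁻¹ ∈ interior B := by
  simp only [UB_eq_prod, Set.prodMk_mem_set_prod_eq, hB.mk_mem_image_iff hfl interior_subset,
    Set.mem_univ, and_true]

variable (fl) in
noncomputable def heisTrivFun (p : G × PontryaginDual G × ℂ) :
    ((G ⧸ Λ) × (PontryaginDual G ⧸ annih Λ)) × ℂ :=
  (((p.1 : G ⧸ Λ), (p.2.1 : PontryaginDual G ⧸ annih Λ)), (p.2.1 (fl p.1) : ℂ) * p.2.2)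

variable (fl) in
noncomputable def heisTrivSymmFun (p : G × PontryaginDual G × ℂ) : Quot (heisRel Λ) :=
  Quot.mk _ (p.1, p.2.1, conj (p.2.1 (fl p.1) : ℂ) * p.2.2)

variable (fl) in
noncomputable def heisTrivSymm (q : ((G ⧸ Λ) × (PontryaginDual G ⧸ annih Λ)) × ℂ) :
    Quot (heisRel Λ) :=
  heisTrivSymmFun fl (q.1.1.out, q.1.2.out, q.2)

section Trivialization

variable (hB : IsFundDomain Λ B) (hfl : ∀ x, x * (fl x : G)⁻¹ ∈ B)
include hB hfl

theorem heisTrivFun_heisAct (l : Λ) (τ : annih Λ) (p : G × PontryaginDual G × ℂ) :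
    heisTrivFun fl (heisAct l τ p) = heisTrivFun fl p := by
  simp only [heisTrivFun, heisAct, hB.floor_mul hfl, QuotientGroup.mk_mul_of_mem _ l.2,
    QuotientGroup.mk_mul_of_mem _ τ.2, mul_annih_apply, Subgroup.coe_mul, map_mul, Circle.coe_mul,
    Prod.mk.injEq, true_and]
  linear_combination (p.2.1 (fl p.1) * p.2.2 : ℂ) * Circle.coe_mul_conj (p.2.1 l)

noncomputable def heisTriv : Quot (heisRel Λ) → ((G ⧸ Λ) × (PontryaginDual G ⧸ annih Λ)) × ℂ :=
  Quot.lift (heisTrivFun fl) fun p _ hpq => by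
    obtain ⟨l, τ, rfl⟩ := heisRel_iff.mp hpq
    exact (heisTrivFun_heisAct hB hfl l τ p).symm

theorem heisTrivSymmFun_mul (x : G) (ω : PontryaginDual G) (z : ℂ) (l : Λ) (τ : annih Λ) :
    heisTrivSymmFun fl (x * l, ω * τ, z) = heisTrivSymmFun fl (x, ω, z) := by
  refine (Quot.sound (heisRel_iff.mpr ⟨l, τ, ?_⟩)).symm
  simp only [heisAct, hB.floor_mul hfl, mul_annih_apply, Subgroup.coe_mul, map_mul, Circle.coe_mul,
    Prod.mk.injEq, true_and]
  ring

theorem heisTrivSymm_mk (x : G) (ω : PontryaginDual G) (z : ℂ) :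
    heisTrivSymm fl (((x : G ⧸ Λ), (ω : PontryaginDual G ⧸ annih Λ)), z) =
      heisTrivSymmFun fl (x, ω, z) := by
  obtain ⟨l, hl⟩ := QuotientGroup.mk_out_eq_mul Λ x
  obtain ⟨τ, hτ⟩ := QuotientGroup.mk_out_eq_mul (annih Λ) ω
  rw [heisTrivSymm, hl, hτ, heisTrivSymmFun_mul hB hfl]

theorem heisTrivSymm_heisTriv (e : Quot (heisRel Λ)) :
    heisTrivSymm fl (heisTriv hB hfl e) = e := by
  obtain ⟨⟨x, ω, z⟩, rfl⟩ := Quot.mk_surjective e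
  change heisTrivSymm fl (heisTrivFun fl (x, ω, z)) = _
  rw [heisTrivFun, heisTrivSymm_mk hB hfl, heisTrivSymmFun]
  dsimp only
  rw [← mul_assoc, mul_comm (conj _), Circle.coe_mul_conj, one_mul]

theorem heisTriv_heisTrivSymm (q : ((G ⧸ Λ) × (PontryaginDual G ⧸ annih Λ)) × ℂ) :
    heisTriv hB hfl (heisTrivSymm fl q) = q := by
  simp only [heisTrivSymm, heisTrivSymmFun, heisTriv, heisTrivFun,
    QuotientGroup.out_eq', ← mul_assoc, Circle.coe_mul_conj, one_mul]

theorem fst_heisTriv (e : Quot (heisRel Λ)) : (heisTriv hB hfl e).1 = heisProj Λ e := by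
  obtain ⟨p, rfl⟩ := Quot.mk_surjective e
  rfl

theorem bijOn_heisTriv :
    Set.BijOn (heisTriv hB hfl) (heisProj Λ ⁻¹' UB Λ B) (UB Λ B ×ˢ Set.univ) := by
  refine Set.InvOn.bijOn (f' := heisTrivSymm fl)
    ⟨fun e _ => heisTrivSymm_heisTriv hB hfl e, fun q _ => heisTriv_heisTrivSymm hB hfl q⟩
    (fun e he => ⟨by rwa [fst_heisTriv], trivial⟩) fun q hq => ?_
  rw [Set.mem_preimage, ← fst_heisTriv hB hfl, heisTriv_heisTrivSymm]
  exact hq.1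

theorem continuousOn_heisTriv : ContinuousOn (heisTriv hB hfl) (heisProj Λ ⁻¹' UB Λ B) := by
  refine (isOpenQuotientMap_quot_mk_heisRel Λ).continuousOn_of_comp ?_
  have hpre : Quot.mk (heisRel Λ) ⁻¹' (heisProj Λ ⁻¹' UB Λ B) =
      {p | p.1 * (fl p.1 : G)⁻¹ ∈ interior B} :=
    Set.ext fun p => hB.mk_mem_UB_iff hfl p.1 p.2.1
  rw [hpre]
  exact hB.continuousOn_floor_comp hfl
    (F := fun (l : Λ) (p : G × PontryaginDual G × ℂ) =>
      (((p.1 : G ⧸ Λ), (p.2.1 : PontryaginDual G ⧸ annih Λ)), (p.2.1 l : ℂ) * p.2.2))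
    (fun l => by fun_prop) continuous_fst

theorem continuousOn_heisTrivSymm : ContinuousOn (heisTrivSymm fl) (UB Λ B ×ˢ Set.univ) := by
  let ρ : G × PontryaginDual G × ℂ → ((G ⧸ Λ) × (PontryaginDual G ⧸ annih Λ)) × ℂ :=
    fun p => (((p.1 : G ⧸ Λ), (p.2.1 : PontryaginDual G ⧸ annih Λ)), p.2.2)
  have hρ : IsOpenQuotientMap ρ :=
    (Homeomorph.prodAssoc _ _ _).symm.isOpenQuotientMap.comp
      (QuotientGroup.isOpenQuotientMap_mk.prodMap (QuotientGroup.isOpenQuotientMap_mk.prodMap .id))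
  refine hρ.continuousOn_of_comp ?_
  have hcomp : heisTrivSymm fl ∘ ρ = heisTrivSymmFun fl :=
    funext fun p => heisTrivSymm_mk hB hfl p.1 p.2.1 p.2.2
  have hpre : ρ ⁻¹' (UB Λ B ×ˢ Set.univ) = {p | p.1 * (fl p.1 : G)⁻¹ ∈ interior B} := by
    ext p
    simp only [ρ, Set.mem_preimage, Set.mem_prod, Set.mem_univ, and_true, hB.mk_mem_UB_iff hfl]
    rfl
  rw [hcomp, hpre]
  exact hB.continuousOn_floor_comp hfl
    (F := fun (l : Λ) (p : G × PontryaginDual G × ℂ) =>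
      Quot.mk (heisRel Λ) (p.1, p.2.1, conj (p.2.1 l : ℂ) * p.2.2))
    (fun l => continuous_quot_mk.comp (by fun_prop)) continuous_fst

end Trivialization

end HeisenbergBundle

theorem heisenberg_line_bundle_locally_trivial_general
    {G : Type*} [CommGroup G] [TopologicalSpace G] [IsTopologicalGroup G]
    (Λ : Subgroup G) [DiscreteTopology Λ]
    (π : Quot (heisRel Λ) → (G ⧸ Λ) × (PontryaginDual G ⧸ annih Λ))
    (hπ : ∀ (x : G) (ω : PontryaginDual G) (z : ℂ),
      π (Quot.mk (heisRel Λ) (x, ω, z)) = (QuotientGroup.mk x, QuotientGroup.mk ω)) :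
    Continuous π ∧
    (∀ B : Set G, IsFundDomain Λ B → IsOpen (UB Λ B)) ∧
    (⋃ B ∈ {B : Set G | IsFundDomain Λ B}, UB Λ B) = Set.univ ∧
    (∀ (B : Set G), IsFundDomain Λ B →
      ∀ (fl : G → Λ), (∀ x : G, x * ((fl x : G))⁻¹ ∈ B) →
      ∃ h : Quot (heisRel Λ) → ((G ⧸ Λ) × (PontryaginDual G ⧸ annih Λ)) × ℂ,
        (∀ (x : G) (ω : PontryaginDual G) (z : ℂ),
          h (Quot.mk (heisRel Λ) (x, ω, z)) =
            ((QuotientGroup.mk x, QuotientGroup.mk ω), ((ω (fl x : G) : ℂ)) * z)) ∧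
        ContinuousOn h (π ⁻¹' UB Λ B) ∧
        Set.BijOn h (π ⁻¹' UB Λ B) ((UB Λ B) ×ˢ (Set.univ : Set ℂ)) ∧
        (∃ k : ((G ⧸ Λ) × (PontryaginDual G ⧸ annih Λ)) × ℂ → Quot (heisRel Λ),
          ContinuousOn k ((UB Λ B) ×ˢ (Set.univ : Set ℂ)) ∧
          (∀ e ∈ π ⁻¹' UB Λ B, k (h e) = e) ∧
          (∀ q ∈ (UB Λ B) ×ˢ (Set.univ : Set ℂ), h (k q) = q))) := by
  obtain rfl : π = heisProj Λ := funext fun e => by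
    obtain ⟨⟨x, ω, z⟩, rfl⟩ := Quot.mk_surjective e
    exact hπ x ω z
  refine ⟨continuous_heisProj Λ, fun B _ => isOpen_UB Λ B, iUnion_UB_eq_univ Λ,
    fun B hB fl hfl => ?_⟩
  exact ⟨heisTriv hB hfl, fun _ _ _ => rfl, continuousOn_heisTriv hB hfl, bijOn_heisTriv hB hfl,
    heisTrivSymm fl, continuousOn_heisTrivSymm hB hfl, fun e _ => heisTrivSymm_heisTriv hB hfl e,
    fun q _ => heisTriv_heisTrivSymm hB hfl q⟩

/-- The quotient `E_{G,Λ} = (G × Ĝ × ℂ)/∼` with projection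
`π([x,ω,z]) = ([x],[ω])` is a complex line bundle over `X = (G/Λ) × (Ĝ/Λ^⊥)`: `π` is
continuous, the sets `U_B` (over fundamental domains `B`) form an open cover of `X`, and
over each `U_B` the map `h([x,ω,z]) = ([x],[ω], ω(⌊x⌋_B)·z)` is a homeomorphic (fiberwise
linear) trivialization of `π⁻¹(U_B)`. -/
theorem heisenberg_line_bundle_locally_trivial
    {G : Type*} [CommGroup G] [TopologicalSpace G] [IsTopologicalGroup G]
    [LocallyCompactSpace G] [T2Space G] [SecondCountableTopology G]
    (Λ : Subgroup G) [DiscreteTopology Λ] [CompactSpace (G ⧸ Λ)]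
    (π : Quot (heisRel Λ) → (G ⧸ Λ) × (PontryaginDual G ⧸ annih Λ))
    (hπ : ∀ (x : G) (ω : PontryaginDual G) (z : ℂ),
      π (Quot.mk (heisRel Λ) (x, ω, z)) = (QuotientGroup.mk x, QuotientGroup.mk ω)) :
    Continuous π ∧
    (∀ B : Set G, IsFundDomain Λ B → IsOpen (UB Λ B)) ∧
    (⋃ B ∈ {B : Set G | IsFundDomain Λ B}, UB Λ B) = Set.univ ∧
    (∀ (B : Set G), IsFundDomain Λ B →
      ∀ (fl : G → Λ), (∀ x : G, x * ((fl x : G))⁻¹ ∈ B) →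
      ∃ h : Quot (heisRel Λ) → ((G ⧸ Λ) × (PontryaginDual G ⧸ annih Λ)) × ℂ,
        (∀ (x : G) (ω : PontryaginDual G) (z : ℂ),
          h (Quot.mk (heisRel Λ) (x, ω, z)) =
            ((QuotientGroup.mk x, QuotientGroup.mk ω), ((ω (fl x : G) : ℂ)) * z)) ∧
        ContinuousOn h (π ⁻¹' UB Λ B) ∧
        Set.BijOn h (π ⁻¹' UB Λ B) ((UB Λ B) ×ˢ (Set.univ : Set ℂ)) ∧
        (∃ k : ((G ⧸ Λ) × (PontryaginDual G ⧸ annih Λ)) × ℂ → Quot (heisRel Λ),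
          ContinuousOn k ((UB Λ B) ×ˢ (Set.univ : Set ℂ)) ∧
          (∀ e ∈ π ⁻¹' UB Λ B, k (h e) = e) ∧
          (∀ q ∈ (UB Λ B) ×ˢ (Set.univ : Set ℂ), h (k q) = q))) :=
  heisenberg_line_bundle_locally_trivial_general Λ π hπ
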